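/- There exists a constant C > 0 such that for every s ∈ ℚ(√2) ∩ [0, √2], one has f(s) ∈ ℚ(√2) and |conj(f(s))| ≤ β·|conj(s)| + C. (Here conj denotes the Galois conjugation of ℚ(√2).) -/

import Mathlib

noncomputable section

/-- `β = √2 - 1`. -/
def β : ℝ := Real.sqrt 2 - 1

/-- `ω = √2 + 1`. -/
def ω : ℝ := Real.sqrt 2 + 1

/-- The break points `Δ_i`. -/
def Δ (i : ℤ) : ℝ :=
  if i < 0 then β ^ i.natAbs
  else if i = 0 then β
  else Real.sqrt 2 - β ^ i.natAbs

/-- The intervals `I_i`. -/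
def Iint (i : ℤ) : Set ℝ :=
  if i < 0 then Set.Ioc (Δ (i - 1)) (Δ i)
  else if i = 0 then Set.Ioo β 1
  else Set.Ico (Δ i) (Δ (i + 1))

/-- The defining formula of `f` on the interval `I_i`. -/
def fval (i : ℤ) (s : ℝ) : ℝ :=
  if i < 0 then ω ^ (i.natAbs + 1) * (Δ i - s)
  else if i = 0 then ω * (s - β)
  else ω ^ (i.natAbs + 1) * (s - Δ i)

/-- `f` is the renormalization map: `f 0 = f √2 = 0` and on each interval `I_i`
    it is given by the corresponding affine formula. These conditions determine
    `f` uniquely on `[0, √2]`. -/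
def IsLuroth (f : ℝ → ℝ) : Prop :=
  f 0 = 0 ∧ f (Real.sqrt 2) = 0 ∧ ∀ i : ℤ, ∀ s ∈ Iint i, f s = fval i s

/-- `ℚ(√2)` as a subset of `ℝ`. -/
def QSqrt2 : Set ℝ := {x | ∃ a b : ℚ, x = (a : ℝ) + (b : ℝ) * Real.sqrt 2}

/-- `ℤ[√2]` as a subset of `ℝ`. -/
def ZSqrt2 : Set ℝ := {x | ∃ m n : ℤ, x = (m : ℝ) + (n : ℝ) * Real.sqrt 2}

/-- `M_d = {s ∈ [0,√2] : d·s ∈ ℤ[√2]}`. -/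
def Mset (d : ℤ) : Set ℝ :=
  {s | s ∈ Set.Icc 0 (Real.sqrt 2) ∧ (d : ℝ) * s ∈ ZSqrt2}

/-
Call `x' = a - b√2` the conjugate of `x = a + b√2` (`ConjPair x x'`). Conjugation respects the ring
operations and sends `ω ↦ -β`, `β ↦ -ω`. On `I_i` the map is `s ↦ ±ω^k (s - Δ_i)` with `k = |i| + 1`,
and the conjugate `Δ_i'` of `Δ_i` satisfies `|Δ_i'| ≤ ω^k`. Hence
`|conj (f s)| = β^k |s' - Δ_i'| ≤ β^k |s'| + β^k ω^k ≤ β |s'| + 1`.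
-/

lemma sqrt_two_mul_self : Real.sqrt 2 * Real.sqrt 2 = 2 := Real.mul_self_sqrt (by norm_num)

lemma beta_pos : 0 < β := by
  unfold β; linarith [Real.one_lt_sqrt_two]

lemma beta_lt_one : β < 1 := by
  unfold β; linarith [Real.sqrt_two_lt_three_halves]

lemma one_le_omega : 1 ≤ ω := by
  unfold ω; linarith [Real.sqrt_nonneg 2]

lemma beta_mul_omega : β * ω = 1 := by
  unfold β ω; linear_combination sqrt_two_mul_self

lemma ratCast_add_mul_sqrt_two_inj {a b c d : ℚ}
    (h : (a : ℝ) + b * Real.sqrt 2 = c + d * Real.sqrt 2) : a = c ∧ b = d := by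
  obtain rfl | hbd := eq_or_ne b d
  · exact ⟨by exact_mod_cast add_right_cancel h, rfl⟩
  · refine absurd ?_ ((irrational_sqrt_two.mul_ratCast (sub_ne_zero.2 hbd)).ne_rat (c - a))
    push_cast
    linarith

def ConjPair (x x' : ℝ) : Prop :=
  ∃ a b : ℚ, x = a + b * Real.sqrt 2 ∧ x' = a - b * Real.sqrt 2

namespace ConjPair

variable {x x' y y' : ℝ}

lemma mem_QSqrt2 (h : ConjPair x x') : x ∈ QSqrt2 :=
  let ⟨a, b, hx, _⟩ := h
  ⟨a, b, hx⟩

lemma unique (h : ConjPair x x') (h' : ConjPair x y') : x' = y' := by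
  obtain ⟨a, b, rfl, rfl⟩ := h
  obtain ⟨c, d, hx, rfl⟩ := h'
  obtain ⟨rfl, rfl⟩ := ratCast_add_mul_sqrt_two_inj hx
  rfl

lemma ratCast (q : ℚ) : ConjPair q q := ⟨q, 0, by simp, by simp⟩

lemma sqrt_two : ConjPair (Real.sqrt 2) (-Real.sqrt 2) := ⟨0, 1, by simp, by simp⟩

lemma add (hx : ConjPair x x') (hy : ConjPair y y') : ConjPair (x + y) (x' + y') := by
  obtain ⟨a, b, rfl, rfl⟩ := hx
  obtain ⟨c, d, rfl, rfl⟩ := hy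
  exact ⟨a + c, b + d, by push_cast; ring, by push_cast; ring⟩

lemma neg (hx : ConjPair x x') : ConjPair (-x) (-x') := by
  obtain ⟨a, b, rfl, rfl⟩ := hx
  exact ⟨-a, -b, by push_cast; ring, by push_cast; ring⟩

lemma sub (hx : ConjPair x x') (hy : ConjPair y y') : ConjPair (x - y) (x' - y') := by
  simpa only [sub_eq_add_neg] using hx.add hy.neg

lemma mul (hx : ConjPair x x') (hy : ConjPair y y') : ConjPair (x * y) (x' * y') := by
  obtain ⟨a, b, rfl, rfl⟩ := hx
  obtain ⟨c, d, rfl, rfl⟩ := hy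
  refine ⟨a * c + 2 * b * d, a * d + b * c, ?_, ?_⟩ <;> push_cast <;>
    linear_combination (b * d : ℝ) * sqrt_two_mul_self

lemma pow (hx : ConjPair x x') (n : ℕ) : ConjPair (x ^ n) (x' ^ n) := by
  induction n with
  | zero => simpa using ratCast 1
  | succ n ih => simpa only [pow_succ] using ih.mul hx

lemma omega : ConjPair ω (-β) := by
  convert sqrt_two.add (ratCast 1) using 1 <;> simp only [ω, β, Rat.cast_one]; ring

lemma beta : ConjPair β (-ω) := by
  convert sqrt_two.sub (ratCast 1) using 1 <;> simp only [ω, β, Rat.cast_one]; ring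

end ConjPair

lemma exists_conjPair_Δ (i : ℤ) : ∃ d', ConjPair (Δ i) d' ∧ |d'| ≤ ω ^ (i.natAbs + 1) := by
  have hω := one_le_omega
  rcases lt_trichotomy i 0 with hi | rfl | hi
  · refine ⟨(-ω) ^ i.natAbs, by simpa [Δ, hi] using ConjPair.beta.pow i.natAbs, ?_⟩
    rw [abs_pow, abs_neg, abs_of_nonneg (by linarith)]
    exact pow_le_pow_right₀ hω (Nat.le_succ _)
  · refine ⟨-ω, by simpa [Δ] using ConjPair.beta, ?_⟩
    rw [abs_neg, abs_of_nonneg (by linarith)]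
    simp
  · have hΔ : Δ i = Real.sqrt 2 - β ^ i.natAbs := by simp [Δ, hi.not_gt, hi.ne']
    refine ⟨-Real.sqrt 2 - (-ω) ^ i.natAbs, hΔ ▸ ConjPair.sqrt_two.sub (ConjPair.beta.pow _), ?_⟩
    have hωn : 1 ≤ ω ^ i.natAbs := one_le_pow₀ hω
    calc |-Real.sqrt 2 - (-ω) ^ i.natAbs| ≤ |Real.sqrt 2| + |(-ω) ^ i.natAbs| := by
          rw [← neg_add', abs_neg]; exact abs_add_le _ _
      _ = Real.sqrt 2 + ω ^ i.natAbs := by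
          rw [abs_of_nonneg (Real.sqrt_nonneg 2), abs_pow, abs_neg, abs_of_nonneg (by linarith)]
      _ ≤ ω ^ i.natAbs * Real.sqrt 2 + ω ^ i.natAbs := by
          nlinarith [Real.sqrt_nonneg 2]
      _ = ω ^ (i.natAbs + 1) := by rw [pow_succ, ω]; ring

lemma fval_eq (i : ℤ) (s : ℝ) :
    fval i s = if i < 0 then -(ω ^ (i.natAbs + 1) * (s - Δ i))
      else ω ^ (i.natAbs + 1) * (s - Δ i) := by
  unfold fval
  split_ifs with _ hzero
  · ring
  · subst hzero; simp [Δ]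
  · rfl

lemma exists_conjPair_fval (i : ℤ) {s s' : ℝ} (hs : ConjPair s s') :
    ∃ y', ConjPair (fval i s) y' ∧ |y'| ≤ β * |s'| + 1 := by
  obtain ⟨d', hd, hd'⟩ := exists_conjPair_Δ i
  set k := i.natAbs + 1
  have hconj : ConjPair (ω ^ k * (s - Δ i)) ((-β) ^ k * (s' - d')) :=
    (ConjPair.omega.pow k).mul (hs.sub hd)
  have hβk : β ^ k ≤ β := pow_le_of_le_one beta_pos.le beta_lt_one.le (by omega)
  have hbound : |(-β) ^ k * (s' - d')| ≤ β * |s'| + 1 := by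
    have hβ := beta_pos
    calc |(-β) ^ k * (s' - d')| = β ^ k * |s' - d'| := by
          rw [abs_mul, abs_pow, abs_neg, abs_of_pos hβ]
      _ ≤ β ^ k * |s'| + β ^ k * ω ^ k := by
          rw [← mul_add]; gcongr; exact (abs_sub _ _).trans (by gcongr)
      _ ≤ β * |s'| + 1 := by
          rw [← mul_pow, beta_mul_omega, one_pow]; gcongr
  rw [fval_eq]
  split_ifs
  · exact ⟨_, hconj.neg, by rwa [abs_neg]⟩
  · exact ⟨_, hconj, hbound⟩

lemma exists_mem_Iint {s : ℝ} (h0 : 0 < s) (h2 : s < Real.sqrt 2) : ∃ i, s ∈ Iint i := by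
  have near (t : ℝ) (ht : 0 < t) (htβ : t ≤ β) : ∃ n : ℕ, 1 ≤ n ∧ β ^ (n + 1) < t ∧ t ≤ β ^ n := by
    obtain ⟨n, hlt, hle⟩ := exists_nat_pow_near_of_lt_one ht (htβ.trans beta_lt_one.le) beta_pos
      beta_lt_one
    refine ⟨n, Nat.one_le_iff_ne_zero.2 ?_, hlt, hle⟩
    rintro rfl
    exact absurd hlt (by simpa using htβ)
  rcases le_or_gt s β with hβ | hβ
  · obtain ⟨n, hn, hlt, hle⟩ := near s h0 hβ
    refine ⟨-n, ?_⟩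
    have h1 : (-(n : ℤ) - 1).natAbs = n + 1 := by omega
    simp only [Iint, Δ, h1, Int.natAbs_neg, Int.natAbs_natCast, if_pos (by omega : -(n : ℤ) < 0),
      if_pos (by omega : -(n : ℤ) - 1 < 0)]
    exact ⟨hlt, hle⟩
  rcases lt_or_ge s 1 with h1 | h1
  · exact ⟨0, by simpa [Iint] using ⟨hβ, h1⟩⟩
  · obtain ⟨n, hn, hlt, hle⟩ := near (Real.sqrt 2 - s) (by linarith) (by unfold β; linarith)
    refine ⟨n, ?_⟩
    have h1 : ((n : ℤ) + 1).natAbs = n + 1 := by omega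
    simp only [Iint, Δ, h1, Int.natAbs_natCast, if_neg (by omega : ¬ (n : ℤ) < 0),
      if_neg (by omega : ¬ (n : ℤ) = 0), if_neg (by omega : ¬ (n : ℤ) + 1 < 0),
      if_neg (by omega : ¬ (n : ℤ) + 1 = 0)]
    constructor <;> linarith

lemma IsLuroth.exists_conjPair_apply {f : ℝ → ℝ} (hf : IsLuroth f) {s s' : ℝ}
    (hs : ConjPair s s') (h0 : 0 ≤ s) (h2 : s ≤ Real.sqrt 2) :
    ∃ y', ConjPair (f s) y' ∧ |y'| ≤ β * |s'| + 1 := by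
  obtain ⟨hf0, hf2, hfI⟩ := hf
  have of_eq_zero (hfs : f s = 0) : ∃ y', ConjPair (f s) y' ∧ |y'| ≤ β * |s'| + 1 :=
    ⟨0, by simpa [hfs] using ConjPair.ratCast 0, by have := beta_pos; simp; positivity⟩
  rcases h0.eq_or_lt with rfl | h0
  · exact of_eq_zero hf0
  rcases h2.eq_or_lt with rfl | h2
  · exact of_eq_zero hf2
  obtain ⟨i, hi⟩ := exists_mem_Iint h0 h2
  rw [hfI i s hi]
  exact exists_conjPair_fval i hs

/-- there is a constant `C > 0` such that for every
`s ∈ ℚ(√2) ∩ [0,√2]` one has `f s ∈ ℚ(√2)` and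
`|conj (f s)| ≤ β·|conj s| + C`, where `conj (a + b√2) = a - b√2`. -/
theorem luroth_conj_contraction (f : ℝ → ℝ) (hf : IsLuroth f) :
    ∃ C : ℝ, 0 < C ∧
      ∀ s ∈ QSqrt2 ∩ Set.Icc (0 : ℝ) (Real.sqrt 2),
        f s ∈ QSqrt2 ∧
        ∀ a b a' b' : ℚ,
          s = (a : ℝ) + (b : ℝ) * Real.sqrt 2 →
          f s = (a' : ℝ) + (b' : ℝ) * Real.sqrt 2 →
          |(a' : ℝ) - (b' : ℝ) * Real.sqrt 2| ≤
            β * |(a : ℝ) - (b : ℝ) * Real.sqrt 2| + C := by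
  refine ⟨1, one_pos, ?_⟩
  rintro s ⟨⟨a₀, b₀, hs⟩, h0, h2⟩
  have hs' : ConjPair s (a₀ - b₀ * Real.sqrt 2) := ⟨a₀, b₀, hs, rfl⟩
  obtain ⟨y', hy, hbound⟩ := hf.exists_conjPair_apply hs' h0 h2
  refine ⟨hy.mem_QSqrt2, fun a b a' b' hab hab' => ?_⟩
  rwa [hy.unique ⟨a', b', hab', rfl⟩, hs'.unique ⟨a, b, hab, rfl⟩] at hbound
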